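/- arXiv:2305.03439 — 8 statements merged into one kernel-verified Lean document; each statement's English description precedes it below -/
import Mathlib

section
/- Let p_1,...,p_K be pairwise distinct (as polynomials) M-variate polynomials over an integral domain R, each of total degree at most d. If X_1,...,X_M are subsets of R each of cardinality greater than d·K·(K-1)/2, then there exists an assignment (x_1,...,x_M) in X_1×...×X_M at which the values p_1(x),...,p_K(x) are pairwise distinct. -/
open MvPolynomial Finset

/-- Grid version of Schwartz–Zippel: a nonzero polynomial of total degree at most `n`
has a nonvanishing point on any grid whose sides have more than `n` elements. -/
lemma sz_grid {R : Type*} [CommRing R] [IsDomain R] :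
    ∀ {M : ℕ} (Q : MvPolynomial (Fin M) R), Q ≠ 0 →
    ∀ (n : ℕ), Q.totalDegree ≤ n → ∀ (X : Fin M → Finset R), (∀ m, n < (X m).card) →
    ∃ x : Fin M → R, (∀ m, x m ∈ X m) ∧ MvPolynomial.eval x Q ≠ 0 := by
  intro M
  induction M with
  | zero =>
    intro Q hQ n _ X _
    obtain ⟨c, rfl⟩ := MvPolynomial.C_surjective (Fin 0) Q
    refine ⟨finZeroElim, fun m => m.elim0, ?_⟩
    simpa using fun h => hQ (by rw [h, map_zero])
  | succ M ih =>
    intro Q hQ n hdeg X hX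
    set q := MvPolynomial.finSuccEquiv R M Q with hq_def
    have hq : q ≠ 0 := by
      simp only [hq_def, ne_eq, EmbeddingLike.map_eq_zero_iff]
      exact hQ
    have hlead : q.coeff q.natDegree ≠ 0 := by
      rw [Polynomial.coeff_natDegree]
      exact Polynomial.leadingCoeff_ne_zero.mpr hq
    have hkey := MvPolynomial.totalDegree_coeff_finSuccEquiv_add_le Q q.natDegree hlead
    have hld : (q.coeff q.natDegree).totalDegree ≤ n :=
      le_trans (le_trans (Nat.le_add_right _ _) hkey) hdeg
    obtain ⟨y, hy, hyne⟩ := ih _ hlead n hld (fun m => X m.succ) (fun m => hX m.succ)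
    set r := q.map (MvPolynomial.eval y) with hr_def
    have hrcoeff : r.coeff q.natDegree ≠ 0 := by
      rw [hr_def, Polynomial.coeff_map]
      exact hyne
    have hr : r ≠ 0 := fun h => hrcoeff (by rw [h, Polynomial.coeff_zero])
    have hrd : r.natDegree ≤ n := by
      refine le_trans Polynomial.natDegree_map_le ?_
      exact le_trans (le_trans (Nat.le_add_left _ _) hkey) hdeg
    -- find a point of `X 0` that is not a root of `r`
    have : ∃ x0 ∈ X 0, Polynomial.eval x0 r ≠ 0 := by
      by_contra hcon
      push_neg at hcon
      have hsub : (X 0).val ⊆ r.roots := by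
        intro x hx
        rw [Polynomial.mem_roots hr]
        exact hcon x hx
      have := Polynomial.card_le_degree_of_subset_roots hsub
      exact absurd (hX 0) (not_lt.mpr (this.trans hrd))
    obtain ⟨x0, hx0, hx0ne⟩ := this
    refine ⟨Fin.cons x0 y, ?_, ?_⟩
    · intro m
      refine Fin.cases ?_ ?_ m
      · simpa using hx0
      · intro i; simpa using hy i
    · rw [MvPolynomial.eval_eq_eval_mv_eval']
      exact hx0ne

/-- Multi-polynomial Schwartz–Zippel separation over an integral domain. -/
theorem schwartz_zippel_separation
    {R : Type*} [CommRing R] [IsDomain R] {M K d : ℕ}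
    (p : Fin K → MvPolynomial (Fin M) R)
    (hdist : ∀ i j : Fin K, i ≠ j → p i ≠ p j)
    (hdeg : ∀ i : Fin K, (p i).totalDegree ≤ d)
    (X : Fin M → Finset R)
    (hX : ∀ m : Fin M, d * K * (K - 1) / 2 < (X m).card) :
    ∃ x : Fin M → R, (∀ m : Fin M, x m ∈ X m) ∧
      ∀ i j : Fin K, i ≠ j →
        MvPolynomial.eval x (p i) ≠ MvPolynomial.eval x (p j) := by
  classical
  set s : Finset (Fin K × Fin K) := Finset.univ.filter fun ij => ij.1 < ij.2 with hs_def
  set Q : MvPolynomial (Fin M) R := ∏ ij ∈ s, (p ij.1 - p ij.2) with hQ_def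
  have hQ : Q ≠ 0 := by
    rw [hQ_def, Finset.prod_ne_zero_iff]
    intro ij hij
    rw [hs_def, Finset.mem_filter] at hij
    exact sub_ne_zero.mpr (hdist _ _ (ne_of_lt hij.2))
  -- cardinality bound on `s`
  have hscard : s.card ≤ K * (K - 1) / 2 := by
    rw [Nat.le_div_iff_mul_le (by norm_num : 0 < 2)]
    have hswap : (s.image Prod.swap).card = s.card :=
      Finset.card_image_of_injective _ Prod.swap_injective
    have hdisj : Disjoint s (s.image Prod.swap) := by
      rw [Finset.disjoint_left]
      intro ij hij hij'
      rw [hs_def, Finset.mem_filter] at hij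
      obtain ⟨kl, hkl, hkl'⟩ := Finset.mem_image.mp hij'
      rw [hs_def, Finset.mem_filter] at hkl
      have h1 := hij.2
      have h2 := hkl.2
      rw [← hkl'] at h1
      simp only [Prod.fst_swap, Prod.snd_swap] at h1
      exact absurd (h1.trans h2) (lt_irrefl _)
    have hsub : s ∪ s.image Prod.swap ⊆ (Finset.univ : Finset (Fin K)).offDiag := by
      intro ij hij
      rw [Finset.mem_union] at hij
      rw [Finset.mem_offDiag]
      rcases hij with hij | hij
      · rw [hs_def, Finset.mem_filter] at hij
        exact ⟨Finset.mem_univ _, Finset.mem_univ _, ne_of_lt hij.2⟩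
      · obtain ⟨kl, hkl, hkl'⟩ := Finset.mem_image.mp hij
        rw [hs_def, Finset.mem_filter] at hkl
        rw [← hkl']
        exact ⟨Finset.mem_univ _, Finset.mem_univ _, ne_of_gt hkl.2⟩
    have hcard := Finset.card_le_card hsub
    rw [Finset.card_union_of_disjoint hdisj, hswap, Finset.offDiag_card,
      Finset.card_univ, Fintype.card_fin] at hcard
    calc s.card * 2 = s.card + s.card := by ring
      _ ≤ K * K - K := hcard
      _ = K * (K - 1) := (Nat.mul_sub_one K K).symm
  have heven : 2 ∣ K * (K - 1) := by
    cases K with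
    | zero => simp
    | succ k =>
      rw [Nat.succ_sub_one]
      rcases Nat.even_or_odd k with he | ho
      · exact Dvd.dvd.mul_left he.two_dvd _
      · exact Dvd.dvd.mul_right (by simpa using ho.add_one.two_dvd) _
  have hdegQ : Q.totalDegree ≤ d * K * (K - 1) / 2 := by
    calc Q.totalDegree ≤ ∑ ij ∈ s, (p ij.1 - p ij.2).totalDegree :=
          MvPolynomial.totalDegree_finset_prod _ _
      _ ≤ ∑ _ij ∈ s, d := Finset.sum_le_sum fun ij _ =>
          le_trans (MvPolynomial.totalDegree_sub _ _) (max_le (hdeg _) (hdeg _))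
      _ = s.card * d := by rw [Finset.sum_const, smul_eq_mul]
      _ ≤ (K * (K - 1) / 2) * d := Nat.mul_le_mul_right _ hscard
      _ = d * K * (K - 1) / 2 := by
          rw [mul_comm, mul_assoc]
          exact (Nat.mul_div_assoc d heven).symm
  obtain ⟨x, hx, hxne⟩ := sz_grid Q hQ _ hdegQ X hX
  refine ⟨x, hx, ?_⟩
  have hfac : ∀ ij ∈ s, MvPolynomial.eval x (p ij.1 - p ij.2) ≠ 0 := by
    intro ij hij hzero
    apply hxne
    rw [hQ_def, map_prod]
    exact Finset.prod_eq_zero hij hzero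
  intro i j hij
  rcases lt_or_gt_of_ne hij with h | h
  · have := hfac (i, j) (by rw [hs_def, Finset.mem_filter]; exact ⟨Finset.mem_univ _, h⟩)
    rw [map_sub] at this
    exact sub_ne_zero.mp this
  · have := hfac (j, i) (by rw [hs_def, Finset.mem_filter]; exact ⟨Finset.mem_univ _, h⟩)
    rw [map_sub] at this
    exact (sub_ne_zero.mp this).symm
end

section
/- For every arctic univariate polynomial p̂ over ℕ (a term built from the variable D, constants in ℕ, binary addition, binary multiplication, and binary max), there exists an ordinary polynomial p over ℕ and a threshold d₀ ∈ ℕ such that for all d ≥ d₀, the evaluation of p̂ at d equals p(d). -/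
/-- Arctic univariate (first-order) polynomials over ℕ:
terms built from constants, the variable `D`, `+`, `·`, and `max`. -/
inductive Arctic where
  | const : ℕ → Arctic
  | varD : Arctic
  | add : Arctic → Arctic → Arctic
  | mul : Arctic → Arctic → Arctic
  | amax : Arctic → Arctic → Arctic

/-- Evaluation of an arctic polynomial at `d : ℕ`. -/
def Arctic.eval : Arctic → ℕ → ℕ
  | const c, _ => c
  | varD, d => d
  | add p q, d => p.eval d + q.eval d
  | mul p q, d => p.eval d * q.eval d
  | amax p q, d => max (p.eval d) (q.eval d)

open Filter in
lemma real_poly_eventual_sign (r : Polynomial ℝ) :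
    ∃ N : ℕ, (∀ n : ℕ, N ≤ n → 0 ≤ r.eval (n : ℝ)) ∨
      (∀ n : ℕ, N ≤ n → r.eval (n : ℝ) ≤ 0) := by
  rcases le_or_gt r.degree 0 with hdeg | hdeg
  · rcases le_total 0 (r.coeff 0) with h | h
    · exact ⟨0, Or.inl fun n _ => by
        rw [Polynomial.eq_C_of_degree_le_zero hdeg]; simpa using h⟩
    · exact ⟨0, Or.inr fun n _ => by
        rw [Polynomial.eq_C_of_degree_le_zero hdeg]; simpa using h⟩
  · rcases le_total 0 r.leadingCoeff with h | h
    · have ht := (r.tendsto_atTop_of_leadingCoeff_nonneg hdeg h).comp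
        (tendsto_natCast_atTop_atTop (R := ℝ))
      have := ht.eventually_ge_atTop 0
      rw [eventually_atTop] at this
      obtain ⟨N, hN⟩ := this
      exact ⟨N, Or.inl fun n hn => hN n hn⟩
    · have ht := (r.tendsto_atBot_of_leadingCoeff_nonpos hdeg h).comp
        (tendsto_natCast_atTop_atTop (R := ℝ))
      have := ht.eventually_le_atBot 0
      rw [eventually_atTop] at this
      obtain ⟨N, hN⟩ := this
      exact ⟨N, Or.inr fun n hn => hN n hn⟩

lemma nat_poly_eventual_compare (p q : Polynomial ℕ) :
    ∃ N : ℕ, (∀ n : ℕ, N ≤ n → q.eval n ≤ p.eval n) ∨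
      (∀ n : ℕ, N ≤ n → p.eval n ≤ q.eval n) := by
  set r : Polynomial ℝ := p.map (Nat.castRingHom ℝ) - q.map (Nat.castRingHom ℝ) with hr
  have key : ∀ n : ℕ, r.eval (n : ℝ) = ((p.eval n : ℕ) : ℝ) - ((q.eval n : ℕ) : ℝ) := by
    intro n
    simp [hr, Polynomial.eval_map, Polynomial.eval₂_at_natCast]
  obtain ⟨N, hN | hN⟩ := real_poly_eventual_sign r
  · refine ⟨N, Or.inl fun n hn => ?_⟩
    have := hN n hn; rw [key] at this
    exact_mod_cast sub_nonneg.mp this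
  · refine ⟨N, Or.inr fun n hn => ?_⟩
    have := hN n hn; rw [key] at this
    exact_mod_cast sub_nonpos.mp this

/-- Every arctic univariate polynomial over ℕ coincides, for all sufficiently
large arguments, with some ordinary polynomial over ℕ. -/
theorem arctic_asymptotic_polynomial (phat : Arctic) :
    ∃ (p : Polynomial ℕ) (d₀ : ℕ), ∀ d : ℕ, d₀ ≤ d →
      phat.eval d = p.eval d := by
  induction phat with
  | const c => exact ⟨Polynomial.C c, 0, fun d _ => by simp [Arctic.eval]⟩
  | varD => exact ⟨Polynomial.X, 0, fun d _ => by simp [Arctic.eval]⟩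
  | add a b iha ihb =>
      obtain ⟨p, d₁, hp⟩ := iha
      obtain ⟨q, d₂, hq⟩ := ihb
      exact ⟨p + q, max d₁ d₂, fun d hd => by
        simp [Arctic.eval, hp d (le_trans (le_max_left _ _) hd),
          hq d (le_trans (le_max_right _ _) hd)]⟩
  | mul a b iha ihb =>
      obtain ⟨p, d₁, hp⟩ := iha
      obtain ⟨q, d₂, hq⟩ := ihb
      exact ⟨p * q, max d₁ d₂, fun d hd => by
        simp [Arctic.eval, hp d (le_trans (le_max_left _ _) hd),
          hq d (le_trans (le_max_right _ _) hd)]⟩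
  | amax a b iha ihb =>
      obtain ⟨p, d₁, hp⟩ := iha
      obtain ⟨q, d₂, hq⟩ := ihb
      obtain ⟨N, hN | hN⟩ := nat_poly_eventual_compare p q
      · refine ⟨p, max N (max d₁ d₂), fun d hd => ?_⟩
        have h1 := hp d (le_trans (le_trans (le_max_left _ _) (le_max_right _ _)) hd)
        have h2 := hq d (le_trans (le_trans (le_max_right _ _) (le_max_right _ _)) hd)
        have h3 := hN d (le_trans (le_max_left _ _) hd)
        simp [Arctic.eval, h1, h2, max_eq_left h3]
      · refine ⟨q, max N (max d₁ d₂), fun d hd => ?_⟩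
        have h1 := hp d (le_trans (le_trans (le_max_left _ _) (le_max_right _ _)) hd)
        have h2 := hq d (le_trans (le_trans (le_max_right _ _) (le_max_right _ _)) hd)
        have h3 := hN d (le_trans (le_max_left _ _) hd)
        simp [Arctic.eval, h1, h2, max_eq_right h3]
end

section
/- The lim operation on arctic univariate polynomials over ℕ is additive and multiplicative: lim(p̂ + q̂) = (lim p̂) + (lim q̂) and lim(p̂ · q̂) = (lim p̂) · (lim q̂), where lim assigns to an arctic polynomial the unique ordinary polynomial agreeing with it on all sufficiently large arguments. -/
/-- `lim` is additive and multiplicative: if `p` (resp. `q`) agrees with the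
arctic polynomial `p̂` (resp. `q̂`) for all sufficiently large arguments, then
`p + q` agrees with `p̂ + q̂` and `p * q` agrees with `p̂ · q̂` eventually. -/
theorem arctic_lim_add_mul (phat qhat : Arctic) (p q : Polynomial ℕ)
    (hp : ∃ d₀ : ℕ, ∀ d : ℕ, d₀ ≤ d → phat.eval d = p.eval d)
    (hq : ∃ d₀ : ℕ, ∀ d : ℕ, d₀ ≤ d → qhat.eval d = q.eval d) :
    (∃ d₀ : ℕ, ∀ d : ℕ, d₀ ≤ d → (Arctic.add phat qhat).eval d = (p + q).eval d)
    ∧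
    (∃ d₀ : ℕ, ∀ d : ℕ, d₀ ≤ d → (Arctic.mul phat qhat).eval d = (p * q).eval d)
    := by
  obtain ⟨a, ha⟩ := hp
  obtain ⟨b, hb⟩ := hq
  refine ⟨⟨max a b, fun d hd => ?_⟩, ⟨max a b, fun d hd => ?_⟩⟩ <;>
  simp [Arctic.eval, ha d (le_trans (le_max_left a b) hd),
    hb d (le_trans (le_max_right a b) hd)]
end

section
/- The degree of a first-kind composition of second-order polynomials multiplies: for second-order polynomials P, Q over ℕ, Deg(P⋆Q) evaluated at any d ∈ ℕ equals Deg(P)(d) · Deg(Q)(d), where Deg assigns to each second-order polynomial an arctic univariate polynomial. -/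
/-- Second-order polynomials over ℕ: terms over `1`, `N`, `+`, `·`, `Λ(·)`. -/
inductive SOP where
  | one : SOP
  | varN : SOP
  | add : SOP → SOP → SOP
  | mul : SOP → SOP → SOP
  | lam : SOP → SOP

/-- Semantics of a second-order polynomial at `n : ℕ` and `ℓ : ℕ → ℕ`. -/
def SOP.eval : SOP → ℕ → (ℕ → ℕ) → ℕ
  | one, _, _ => 1
  | varN, n, _ => n
  | add P Q, n, l => P.eval n l + Q.eval n l
  | mul P Q, n, l => P.eval n l * Q.eval n l
  | lam P, n, l => l (P.eval n l)

/-- First-kind composition `P ⋆ Q`: substitute `Q` for the variable `N` in `P`. -/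
def SOP.star : SOP → SOP → SOP
  | .one, _ => .one
  | .varN, Q => Q
  | .add P₁ P₂, Q => .add (P₁.star Q) (P₂.star Q)
  | .mul P₁ P₂, Q => .mul (P₁.star Q) (P₂.star Q)
  | .lam P, Q => .lam (P.star Q)

/-- Second-kind composition `P ∘ Q`: substitute `Q` for the variable `Λ` in `P`. -/
def SOP.compL : SOP → SOP → SOP
  | .one, _ => .one
  | .varN, _ => .varN
  | .add P₁ P₂, Q => .add (P₁.compL Q) (P₂.compL Q)
  | .mul P₁ P₂, Q => .mul (P₁.compL Q) (P₂.compL Q)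
  | .lam P, Q => Q.star (P.compL Q)

/-- The second-order degree: an arctic univariate polynomial. -/
def SOP.deg : SOP → Arctic
  | .one => .const 0
  | .varN => .const 1
  | .add P Q => .amax P.deg Q.deg
  | .mul P Q => .add P.deg Q.deg
  | .lam P => .mul .varD P.deg

/-- The degree of the first-kind composition multiplies. -/
theorem SOP.deg_star (P Q : SOP) (d : ℕ) :
    (P.star Q).deg.eval d = P.deg.eval d * Q.deg.eval d := by
  induction P with
  | one => simp [SOP.star, SOP.deg, Arctic.eval]
  | varN => simp [SOP.star, SOP.deg, Arctic.eval]
  | add P₁ P₂ ih₁ ih₂ =>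
      simp [SOP.star, SOP.deg, Arctic.eval, ih₁, ih₂, Nat.mul_comm, Nat.mul_max_mul_left]
  | mul P₁ P₂ ih₁ ih₂ =>
      simp [SOP.star, SOP.deg, Arctic.eval, ih₁, ih₂, Nat.add_mul]
  | lam P ih =>
      simp [SOP.star, SOP.deg, Arctic.eval, ih, Nat.mul_assoc]
end

section
/- The degree of a second-order polynomial is well-defined on syntactic equivalence classes: if P ≡ Q under the equivalence generated by commutativity and associativity of + and ·, multiplicative identity (P·1 ≡ P), distributivity (P·(Q+R) ≡ P·Q+P·R), and congruence under +, ·, and Λ, then the arctic polynomials Deg(P) and Deg(Q) evaluate equally at every d ∈ ℕ. -/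
/-- Syntactic equivalence of second-order polynomials, generated by
commutativity, associativity, unit, distributivity, and congruence. -/
inductive SOP.Equiv : SOP → SOP → Prop
  | refl (P : SOP) : SOP.Equiv P P
  | symm {P Q : SOP} : SOP.Equiv P Q → SOP.Equiv Q P
  | trans {P Q R : SOP} : SOP.Equiv P Q → SOP.Equiv Q R → SOP.Equiv P R
  | addComm (P Q : SOP) : SOP.Equiv (.add P Q) (.add Q P)
  | addAssoc (P Q R : SOP) : SOP.Equiv (.add (.add P Q) R) (.add P (.add Q R))
  | mulComm (P Q : SOP) : SOP.Equiv (.mul P Q) (.mul Q P)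
  | mulAssoc (P Q R : SOP) : SOP.Equiv (.mul (.mul P Q) R) (.mul P (.mul Q R))
  | mulOne (P : SOP) : SOP.Equiv (.mul P .one) P
  | distrib (P Q R : SOP) :
      SOP.Equiv (.mul P (.add Q R)) (.add (.mul P Q) (.mul P R))
  | addCongr {P P' Q Q' : SOP} :
      SOP.Equiv P P' → SOP.Equiv Q Q' → SOP.Equiv (.add P Q) (.add P' Q')
  | mulCongr {P P' Q Q' : SOP} :
      SOP.Equiv P P' → SOP.Equiv Q Q' → SOP.Equiv (.mul P Q) (.mul P' Q')
  | lamCongr {P P' : SOP} : SOP.Equiv P P' → SOP.Equiv (.lam P) (.lam P')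

/-- The degree is well-defined on syntactic equivalence classes. -/
theorem SOP.deg_well_defined (P Q : SOP) (h : SOP.Equiv P Q) (d : ℕ) :
    P.deg.eval d = Q.deg.eval d := by
  induction h with
  | refl P => rfl
  | symm _ ih => exact ih.symm
  | trans _ _ ih1 ih2 => exact ih1.trans ih2
  | addComm P Q => simp [SOP.deg, Arctic.eval, Nat.max_comm]
  | addAssoc P Q R => simp [SOP.deg, Arctic.eval, Nat.max_assoc]
  | mulComm P Q => simp [SOP.deg, Arctic.eval, Nat.add_comm]
  | mulAssoc P Q R => simp [SOP.deg, Arctic.eval, Nat.add_assoc]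
  | mulOne P => simp [SOP.deg, Arctic.eval]
  | distrib P Q R => simp [SOP.deg, Arctic.eval, Nat.add_max_add_left]
  | addCongr _ _ ih1 ih2 => simp [SOP.deg, Arctic.eval, ih1, ih2]
  | mulCongr _ _ ih1 ih2 => simp [SOP.deg, Arctic.eval, ih1, ih2]
  | lamCongr _ ih => simp [SOP.deg, Arctic.eval, ih]
end

section
/- Semantic completeness (separation) of second-order polynomials: if P₁,...,P_K are second-order polynomials over ℕ that are pairwise non-equivalent under the syntactic equivalence generated by commutativity, associativity, unit, and distributivity laws with congruence, then there exist n ∈ ℕ and a nondecreasing ℓ : ℕ → ℕ such that the values ⟦P_k⟧(n,ℓ) are pairwise distinct. -/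
namespace Multiset

theorem map_eq_map_of_map_eq {α β γ : Type*} {f : α → β} {g : α → γ} {s t : Multiset α}
    (h : s.map f = t.map f) (hfg : ∀ a ∈ s, ∀ b ∈ t, f a = f b → g a = g b) :
    s.map g = t.map g := by
  rw [← rel_eq, rel_map] at h ⊢
  exact h.mono hfg

theorem prod_map_pow_eq_pow_sum {α M : Type*} [CommMonoid M] (s : Multiset α) (f : α → ℕ)
    (b : M) : (s.map fun a => b ^ f a).prod = b ^ (s.map f).sum :=
  Multiset.induction_on s (by simp) fun _ _ ih => by simp [ih, pow_add]

theorem exists_count_eq_count_succ_and_sum_map_pow (B : ℕ) (s : Multiset ℕ) :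
    ∃ t : Multiset ℕ, (∀ k, t.count k = s.count (k + 1)) ∧
      (s.map (B ^ ·)).sum = s.count 0 + B * (t.map (B ^ ·)).sum := by
  set t := (s.filter (· ≠ 0)).map (· - 1)
  have hs : s = replicate (s.count 0) 0 + t.map Nat.succ := by
    have h : t.map Nat.succ = s.filter (· ≠ 0) := by
      rw [map_map]
      exact (map_congr rfl fun e he => Nat.sub_one_add_one (mem_filter.1 he).2).trans (map_id _)
    rw [h, ← filter_eq', filter_add_not]
  refine ⟨t, fun k => ?_, ?_⟩
  · rw [hs, count_add, count_replicate, if_neg k.succ_ne_zero.symm, zero_add,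
      count_map_eq_count' _ _ Nat.succ_injective]
  · conv_lhs => rw [hs]
    simp [map_map, pow_succ', sum_map_mul_left]

theorem count_eq_sum_map_pow_div_pow_mod {B : ℕ} {s : Multiset ℕ} (hs : ∀ k, s.count k < B)
    (k : ℕ) : s.count k = (s.map (B ^ ·)).sum / B ^ k % B := by
  induction k generalizing s with
  | zero =>
    obtain ⟨_, -, hsum⟩ := exists_count_eq_count_succ_and_sum_map_pow B s
    rw [hsum, pow_zero, Nat.div_one, Nat.add_mul_mod_self_left, Nat.mod_eq_of_lt (hs 0)]
  | succ k ih =>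
    obtain ⟨t, ht, hsum⟩ := exists_count_eq_count_succ_and_sum_map_pow B s
    rw [← ht, ih fun j => ht j ▸ hs (j + 1), hsum, pow_succ', ← Nat.div_div_eq_div_mul,
      Nat.add_mul_div_left _ _ (pos_of_gt (hs 0)), Nat.div_eq_of_lt (hs 0), zero_add]

theorem eq_of_sum_map_pow_eq {B : ℕ} {s t : Multiset ℕ} (hs : ∀ k, s.count k < B)
    (ht : ∀ k, t.count k < B) (h : (s.map (B ^ ·)).sum = (t.map (B ^ ·)).sum) : s = t :=
  ext.2 fun k => by
    rw [count_eq_sum_map_pow_div_pow_mod hs, count_eq_sum_map_pow_div_pow_mod ht, h]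

theorem eq_of_card_lt_of_sum_map_pow_eq {B : ℕ} {s t : Multiset ℕ} (hs : card s < B)
    (ht : card t < B) (h : (s.map (B ^ ·)).sum = (t.map (B ^ ·)).sum) : s = t :=
  eq_of_sum_map_pow_eq (fun k => (count_le_card k s).trans_lt hs)
    (fun k => (count_le_card k t).trans_lt ht) h

end Multiset

namespace SOP

instance setoid : Setoid SOP := ⟨Equiv, ⟨Equiv.refl, Equiv.symm, Equiv.trans⟩⟩

def Cls : Type := Quotient setoid

namespace Cls

def mk (P : SOP) : Cls := Quotient.mk setoid P

theorem mk_eq_mk {P Q : SOP} : mk P = mk Q ↔ P.Equiv Q := Quotient.eq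

@[elab_as_elim]
theorem ind {p : Cls → Prop} (h : ∀ P, p (mk P)) (a : Cls) : p a := Quotient.ind h a

instance : One Cls := ⟨mk one⟩
instance : Add Cls := ⟨Quotient.map₂ add fun _ _ h _ _ h' => Equiv.addCongr h h'⟩
instance : Mul Cls := ⟨Quotient.map₂ mul fun _ _ h _ _ h' => Equiv.mulCongr h h'⟩

theorem mk_add (P Q : SOP) : mk (add P Q) = mk P + mk Q := rfl
theorem mk_mul (P Q : SOP) : mk (mul P Q) = mk P * mk Q := rfl

instance : CommMonoid Cls where
  mul_assoc := ind fun P => ind fun Q => ind fun R => mk_eq_mk.2 (Equiv.mulAssoc P Q R)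
  one_mul := ind fun P => mk_eq_mk.2 ((Equiv.mulComm _ _).trans (Equiv.mulOne P))
  mul_one := ind fun P => mk_eq_mk.2 (Equiv.mulOne P)
  mul_comm := ind fun P => ind fun Q => mk_eq_mk.2 (Equiv.mulComm P Q)

instance : AddCommSemigroup Cls where
  add_assoc := ind fun P => ind fun Q => ind fun R => mk_eq_mk.2 (Equiv.addAssoc P Q R)
  add_comm := ind fun P => ind fun Q => mk_eq_mk.2 (Equiv.addComm P Q)

theorem mul_add (a b c : Cls) : a * (b + c) = a * b + a * c :=
  ind (fun P => ind (fun Q => ind (fun R => mk_eq_mk.2 (Equiv.distrib P Q R)) c) b) a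

theorem add_mul (a b c : Cls) : (a + b) * c = a * c + b * c := by
  rw [mul_comm, mul_add, mul_comm c, mul_comm c]

end Cls

/-- Adjoining a zero turns `SOP` modulo `SOP.Equiv` into a commutative semiring, in which normal forms can
be summed. -/
instance : CommSemiring (WithZero Cls) where
  __ := (inferInstance : AddCommMonoid (WithZero Cls))
  __ := (inferInstance : CommMonoidWithZero (WithZero Cls))
  left_distrib a b c := by
    induction a <;> induction b <;> induction c <;>
      simp [← WithZero.coe_add, ← WithZero.coe_mul, Cls.mul_add]
  right_distrib a b c := by
    induction a <;> induction b <;> induction c <;>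
      simp [← WithZero.coe_add, ← WithZero.coe_mul, Cls.add_mul]

def nf : SOP → Multiset (Multiset SOP)
  | one => {0}
  | varN => {{varN}}
  | add P Q => nf P + nf Q
  | mul P Q => (nf P).bind fun m => (nf Q).map (m + ·)
  | lam P => {{lam P}}

theorem sum_map_prod_nf {R : Type*} [CommSemiring R] {F : SOP → R} (h_one : F one = 1)
    (h_add : ∀ P Q, F (add P Q) = F P + F Q) (h_mul : ∀ P Q, F (mul P Q) = F P * F Q)
    (P : SOP) : ((nf P).map fun m => (m.map F).prod).sum = F P := by
  induction P with
  | one => simp [nf, h_one]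
  | varN | lam => simp [nf]
  | add P Q ihP ihQ => simp [nf, h_add, ihP, ihQ]
  | mul P Q ihP ihQ =>
    simp only [nf, Multiset.map_bind, Multiset.sum_bind, Multiset.map_map, Function.comp_def,
      Multiset.map_add, Multiset.prod_add, Multiset.sum_map_mul_left,
      Multiset.sum_map_mul_right, ihP, ihQ, h_mul]

def width : SOP → ℕ
  | one | varN => 1
  | add P Q => P.width + Q.width
  | mul P Q => (P.width + 1) * (Q.width + 1)
  | lam P => P.width + 1

theorem card_nf_le_width (P : SOP) : Multiset.card (nf P) ≤ width P := by
  induction P with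
  | one | varN | lam => simp [nf, width]
  | add P Q ihP ihQ => simp only [nf, width, Multiset.card_add]; omega
  | mul P Q ihP ihQ =>
    simp [nf, width, Multiset.card_bind]
    nlinarith

theorem card_le_width_of_mem_nf {P : SOP} {m : Multiset SOP} (hm : m ∈ nf P) :
    Multiset.card m ≤ width P := by
  induction P generalizing m with
  | one | varN | lam => simp_all [nf, width]
  | add P Q ihP ihQ =>
    rcases Multiset.mem_add.1 hm with hm | hm
    · have := ihP hm; simp only [width]; omega
    · have := ihQ hm; simp only [width]; omega
  | mul P Q ihP ihQ =>
    simp only [nf, Multiset.mem_bind, Multiset.mem_map] at hm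
    obtain ⟨m₁, hm₁, m₂, hm₂, rfl⟩ := hm
    have := ihP hm₁; have := ihQ hm₂
    simp only [width, Multiset.card_add]; nlinarith

theorem eq_varN_or_lam_of_mem_nf {P a : SOP} {m : Multiset SOP} (hm : m ∈ nf P) (ha : a ∈ m) :
    a = varN ∨ ∃ R, a = lam R ∧ width R < width P := by
  induction P generalizing m with
  | one => simp_all [nf]
  | varN => simp_all [nf]
  | lam R => simp_all [nf, width]
  | add P Q ihP ihQ =>
    simp only [width]
    rcases Multiset.mem_add.1 hm with hm | hm
    · exact (ihP hm ha).imp_right fun ⟨R, hR, hlt⟩ => ⟨R, hR, by omega⟩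
    · exact (ihQ hm ha).imp_right fun ⟨R, hR, hlt⟩ => ⟨R, hR, by omega⟩
  | mul P Q ihP ihQ =>
    simp only [nf, Multiset.mem_bind, Multiset.mem_map] at hm
    obtain ⟨m₁, hm₁, m₂, hm₂, rfl⟩ := hm
    simp only [width]
    rcases Multiset.mem_add.1 ha with ha | ha
    · exact (ihP hm₁ ha).imp_right fun ⟨R, hR, hlt⟩ => ⟨R, hR, by nlinarith⟩
    · exact (ihQ hm₂ ha).imp_right fun ⟨R, hR, hlt⟩ => ⟨R, hR, by nlinarith⟩

theorem mk_eq_sum_map_prod_nf (P : SOP) :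
    ((Cls.mk P : Cls) : WithZero Cls) =
      ((nf P).map fun m => (m.map fun a => ((Cls.mk a : Cls) : WithZero Cls)).prod).sum :=
  (sum_map_prod_nf (F := fun a => ((Cls.mk a : Cls) : WithZero Cls)) WithZero.coe_one
    (fun P Q => by rw [Cls.mk_add, WithZero.coe_add])
    (fun P Q => by rw [Cls.mk_mul, WithZero.coe_mul]) P).symm

-- The shift `m + 1` keeps the code of every `Λ R` apart from the code `0` of `N`.
def ell (B m : ℕ) : ℕ := B ^ B ^ (m + 1)

theorem monotone_ell {B : ℕ} (hB : 0 < B) : Monotone (ell B) := fun _ _ h =>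
  Nat.pow_le_pow_right hB (Nat.pow_le_pow_right hB (Nat.succ_le_succ h))

def atomCode (B : ℕ) : SOP → ℕ
  | lam R => R.eval B (ell B) + 1
  | _ => 0

def monomialCode (B : ℕ) (m : Multiset SOP) : ℕ := ((m.map (atomCode B)).map (B ^ ·)).sum

theorem eval_eq_sum_map_pow_monomialCode (B : ℕ) (P : SOP) :
    P.eval B (ell B) = (((nf P).map (monomialCode B)).map (B ^ ·)).sum := by
  rw [← sum_map_prod_nf (F := fun P => P.eval B (ell B)) rfl (fun _ _ => rfl) (fun _ _ => rfl),
    Multiset.map_map]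
  refine congrArg Multiset.sum (Multiset.map_congr rfl fun m hm => ?_)
  have hatom : ∀ a ∈ m, a.eval B (ell B) = B ^ B ^ atomCode B a := fun a ha => by
    rcases eq_varN_or_lam_of_mem_nf hm ha with rfl | ⟨R, rfl, -⟩ <;> simp [eval, atomCode, ell]
  rw [Function.comp_apply, Multiset.map_congr rfl hatom, Multiset.prod_map_pow_eq_pow_sum,
    monomialCode, Multiset.map_map]
  rfl

theorem equiv_of_eval_eq {B : ℕ} {P Q : SOP} (hP : width P < B) (hQ : width Q < B)
    (h : P.eval B (ell B) = Q.eval B (ell B)) : P.Equiv Q := by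
  rw [← Cls.mk_eq_mk, ← WithZero.coe_inj, mk_eq_sum_map_prod_nf, mk_eq_sum_map_prod_nf]
  rw [eval_eq_sum_map_pow_monomialCode, eval_eq_sum_map_pow_monomialCode] at h
  have hnf := Multiset.eq_of_card_lt_of_sum_map_pow_eq
    (by simpa using (card_nf_le_width P).trans_lt hP)
    (by simpa using (card_nf_le_width Q).trans_lt hQ) h
  refine congrArg Multiset.sum (Multiset.map_eq_map_of_map_eq hnf fun m hm m' hm' hmm' => ?_)
  have hcode := Multiset.eq_of_card_lt_of_sum_map_pow_eq
    (by simpa using (card_le_width_of_mem_nf hm).trans_lt hP)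
    (by simpa using (card_le_width_of_mem_nf hm').trans_lt hQ) hmm'
  refine congrArg Multiset.prod (Multiset.map_eq_map_of_map_eq hcode fun a ha a' ha' haa' => ?_)
  rcases eq_varN_or_lam_of_mem_nf hm ha with rfl | ⟨R, rfl, hR⟩ <;>
    rcases eq_varN_or_lam_of_mem_nf hm' ha' with rfl | ⟨R', rfl, hR'⟩
  · rfl
  · simp [atomCode] at haa'
  · simp [atomCode] at haa'
  · have hRR' : R.Equiv R' :=
      equiv_of_eval_eq (hR.trans hP) (hR'.trans hQ) (by simpa [atomCode] using haa')
    exact congrArg _ (Cls.mk_eq_mk.2 hRR'.lamCongr)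
termination_by width P + width Q

end SOP

/-- Semantic separation: pairwise syntactically non-equivalent second-order
polynomials can be made to evaluate pairwise distinctly. -/
theorem SOP.semantic_separation {K : ℕ} (P : Fin K → SOP)
    (h : ∀ i j : Fin K, i ≠ j → ¬ SOP.Equiv (P i) (P j)) :
    ∃ (n : ℕ) (l : ℕ → ℕ), Monotone l ∧
      ∀ i j : Fin K, i ≠ j → (P i).eval n l ≠ (P j).eval n l := by
  set B := Finset.univ.sup (fun i => (P i).width) + 1
  have hB : ∀ i, (P i).width < B := fun i =>
    Nat.lt_succ_of_le (Finset.le_sup (f := fun i => (P i).width) (Finset.mem_univ i))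
  exact ⟨B, ell B, monotone_ell (Nat.succ_pos _), fun i j hij heq =>
    h i j hij (equiv_of_eval_eq (hB i) (hB j) heq)⟩
end

section
/- In particular, two second-order polynomials over ℕ agreeing semantically on all inputs are syntactically equivalent: if ⟦P⟧(n,ℓ) = ⟦Q⟧(n,ℓ) for all n ∈ ℕ and all nondecreasing ℓ : ℕ → ℕ, then P ≡ Q under the equivalence generated by commutativity, associativity, unit, distributivity, and congruence. -/
/-!
Every term is equivalent to its normal form: a sum of monomials, each a product of atoms `N` and
`Λ(R)` with `R` again in normal form. Evaluate at `n = B` and `ℓ(m) = B ^ B ^ m`, with `B` larger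
than the number of monomials and of atoms per monomial anywhere in `P` or `Q`. Then `N = B ^ B ^ 0`
and `Λ(R) = B ^ B ^ ⟦R⟧` with `⟦R⟧ ≥ 1`, so a monomial evaluates to `B ^ k` with `k` a sum of
fewer than `B` powers of `B`, and a normal form to a sum of fewer than `B` such powers `B ^ k`.
Uniqueness of base-`B` expansions recovers the multiset of monomial exponents `k`, then within
matched monomials the multiset of atom exponents; equal exponents of `Λ`-atoms are equal values
of smaller normal forms, which are equivalent by induction.
-/

namespace List

theorem exists_forall₂_perm_of_perm_map {α β : Type*} {f : α → β} {R : α → α → Prop}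
    {l l' : List α} (h : (l.map f).Perm (l'.map f))
    (hR : ∀ a ∈ l, ∀ b ∈ l', f a = f b → R a b) :
    ∃ l'', Forall₂ R l l'' ∧ l''.Perm l' := by
  have : Relation.Comp (fun x y => x = map f y) Perm (l.map f) l' := by
    rw [eq_map_comp_perm]; exact h
  obtain ⟨l'', hmap, hperm⟩ := this
  have hf : Forall₂ (fun a b => f a = f b) l l'' := by
    have := forall₂_eq_eq_eq ▸ hmap
    rwa [forall₂_map_left_iff, forall₂_map_right_iff] at this
  refine ⟨l'', (forall₂_iff_zip.2 ⟨hf.length_eq, fun hab => ?_⟩), hperm⟩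
  exact hR _ (of_mem_zip hab).1 _ (hperm.subset (of_mem_zip hab).2) (forall₂_zip hf hab)

theorem exists_perm_replicate_zero_append_map_succ :
    ∀ s : List ℕ, ∃ (c : ℕ) (s' : List ℕ), s.Perm (replicate c 0 ++ s'.map (· + 1))
  | [] => ⟨0, [], .refl _⟩
  | 0 :: s => by
    obtain ⟨c, s', h⟩ := exists_perm_replicate_zero_append_map_succ s
    exact ⟨c + 1, s', h.cons 0⟩
  | (e + 1) :: s => by
    obtain ⟨c, s', h⟩ := exists_perm_replicate_zero_append_map_succ s
    exact ⟨c, e :: s', (h.cons _).trans perm_middle.symm⟩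

theorem sum_map_pow_replicate_zero_append_map_succ (B c : ℕ) (s : List ℕ) :
    ((replicate c 0 ++ s.map (· + 1)).map (B ^ ·)).sum = c + B * (s.map (B ^ ·)).sum := by
  simp [Function.comp_def, pow_succ', sum_map_mul_left]

theorem perm_of_sum_map_pow_eq {B : ℕ} {s t : List ℕ} (hs : s.length < B) (ht : t.length < B)
    (h : (s.map (B ^ ·)).sum = (t.map (B ^ ·)).sum) : s.Perm t := by
  suffices key : ∀ K, ∀ s t : List ℕ, (∀ e ∈ s, e < K) → (∀ e ∈ t, e < K) →
      s.length < B → t.length < B → (s.map (B ^ ·)).sum = (t.map (B ^ ·)).sum → s.Perm t from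
    key ((s ++ t).sum + 1) s t (fun e he => Nat.lt_succ_of_le (le_sum_of_mem (by simp [he])))
      (fun e he => Nat.lt_succ_of_le (le_sum_of_mem (by simp [he]))) hs ht h
  intro K
  induction K with
  | zero =>
    intro s t hsK htK _ _ _
    rw [eq_nil_iff_forall_not_mem.2 fun e he => Nat.not_lt_zero e (hsK e he),
      eq_nil_iff_forall_not_mem.2 fun e he => Nat.not_lt_zero e (htK e he)]
  | succ K ih =>
    intro s t hsK htK hs ht h
    obtain ⟨c, s', hs'⟩ := exists_perm_replicate_zero_append_map_succ s
    obtain ⟨d, t', ht'⟩ := exists_perm_replicate_zero_append_map_succ t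
    have hlen_s := hs'.length_eq
    have hlen_t := ht'.length_eq
    simp only [length_append, length_replicate, length_map] at hlen_s hlen_t
    have hsum : c + B * (s'.map (B ^ ·)).sum = d + B * (t'.map (B ^ ·)).sum := by
      rw [← sum_map_pow_replicate_zero_append_map_succ,
        ← sum_map_pow_replicate_zero_append_map_succ, ← (hs'.map _).sum_eq,
        ← (ht'.map _).sum_eq, h]
    obtain ⟨hq, hr⟩ := (Nat.div_mod_unique (by omega)).2 ⟨hsum, (by omega : c < B)⟩
    obtain ⟨hq', hr'⟩ := (Nat.div_mod_unique (by omega)).2 ⟨rfl, (by omega : d < B)⟩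
    have hcd : c = d := hr.symm.trans hr'
    have hst' : s'.Perm t' := by
      refine ih s' t' (fun e he => ?_) (fun e he => ?_) (by omega) (by omega) (hq.symm.trans hq')
      · have := hsK (e + 1) (hs'.symm.subset (by simp [he])); omega
      · have := htK (e + 1) (ht'.symm.subset (by simp [he])); omega
    exact hs'.trans (hcd ▸ (hst'.map _).append_left _) |>.trans ht'.symm

end List

namespace SOP

theorem Equiv.eval_eq {P Q : SOP} (h : Equiv P Q) (n : ℕ) (l : ℕ → ℕ) :
    P.eval n l = Q.eval n l := by
  induction h <;> simp_all only [eval] <;> ring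

theorem Equiv.add_left_comm (P Q R : SOP) : Equiv (add P (add Q R)) (add Q (add P R)) :=
  (addAssoc P Q R).symm.trans ((addCongr (addComm P Q) (refl R)).trans (addAssoc Q P R))

theorem Equiv.mul_left_comm (P Q R : SOP) : Equiv (mul P (mul Q R)) (mul Q (mul P R)) :=
  (mulAssoc P Q R).symm.trans ((mulCongr (mulComm P Q) (refl R)).trans (mulAssoc Q P R))

theorem Equiv.one_mul (P : SOP) : Equiv (mul one P) P :=
  (mulComm one P).trans (mulOne P)

theorem Equiv.add_mul (P Q R : SOP) : Equiv (mul (add P Q) R) (add (mul P R) (mul Q R)) :=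
  (mulComm _ R).trans ((distrib R P Q).trans (addCongr (mulComm R P) (mulComm R Q)))

def ofMonomial : List SOP → SOP
  | [] => one
  | a :: m => mul a (ofMonomial m)

/-- The empty sum, which never arises from `monomials`, is sent to `one`. -/
def ofMonomials : List (List SOP) → SOP
  | [] => one
  | [m] => ofMonomial m
  | m :: d => add (ofMonomial m) (ofMonomials d)

def mulMonomials (d d' : List (List SOP)) : List (List SOP) :=
  d.flatMap fun m => d'.map (m ++ ·)

def monomials : SOP → List (List SOP)
  | one => [[]]
  | varN => [[varN]]
  | add P Q => P.monomials ++ Q.monomials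
  | mul P Q => mulMonomials P.monomials Q.monomials
  | lam P => [[lam (ofMonomials P.monomials)]]

def normalize (P : SOP) : SOP := ofMonomials P.monomials

theorem monomials_lam (P : SOP) : (lam P).monomials = [[lam P.normalize]] := rfl

theorem ofMonomial_perm {m m' : List SOP} (h : m.Perm m') :
    Equiv (ofMonomial m) (ofMonomial m') := by
  induction h with
  | nil => exact .refl _
  | cons a _ ih => exact .mulCongr (.refl a) ih
  | swap a b m => exact .mul_left_comm b a _
  | trans _ _ ih₁ ih₂ => exact ih₁.trans ih₂

theorem ofMonomial_congr {m m' : List SOP} (h : List.Forall₂ Equiv m m') :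
    Equiv (ofMonomial m) (ofMonomial m') := by
  induction h with
  | nil => exact .refl _
  | cons hab _ ih => exact .mulCongr hab ih

theorem ofMonomial_append (m m' : List SOP) :
    Equiv (ofMonomial (m ++ m')) (mul (ofMonomial m) (ofMonomial m')) := by
  induction m with
  | nil => exact (Equiv.one_mul _).symm
  | cons a m ih => exact (Equiv.mulCongr (.refl a) ih).trans (.symm (.mulAssoc _ _ _))

theorem ofMonomials_cons (m : List SOP) {d : List (List SOP)} (hd : d ≠ []) :
    ofMonomials (m :: d) = add (ofMonomial m) (ofMonomials d) := by
  cases d with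
  | nil => exact absurd rfl hd
  | cons => rfl

theorem ofMonomials_perm {d d' : List (List SOP)} (h : d.Perm d') :
    Equiv (ofMonomials d) (ofMonomials d') := by
  induction h with
  | nil => exact .refl _
  | @cons m d d' h ih =>
    rcases eq_or_ne d [] with rfl | hd
    · rw [List.nil_perm.1 h]; exact .refl _
    rw [ofMonomials_cons m hd, ofMonomials_cons m (by rintro rfl; exact hd h.eq_nil)]
    exact .addCongr (.refl _) ih
  | swap m m' d =>
    rcases eq_or_ne d [] with rfl | hd
    · exact .addComm _ _
    simp only [ofMonomials_cons _ hd, ofMonomials_cons _ (List.cons_ne_nil _ _)]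
    exact .add_left_comm _ _ _
  | trans _ _ ih₁ ih₂ => exact ih₁.trans ih₂

theorem ofMonomials_congr {d d' : List (List SOP)}
    (h : List.Forall₂ (fun m m' => Equiv (ofMonomial m) (ofMonomial m')) d d') :
    Equiv (ofMonomials d) (ofMonomials d') := by
  induction h with
  | nil => exact .refl _
  | @cons m m' d d' hm h ih =>
    rcases h with _ | ⟨_, h⟩
    · exact hm
    rw [ofMonomials_cons _ (List.cons_ne_nil _ _), ofMonomials_cons _ (List.cons_ne_nil _ _)]
    exact .addCongr hm ih

theorem ofMonomials_append {d d' : List (List SOP)} (hd : d ≠ []) (hd' : d' ≠ []) :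
    Equiv (ofMonomials (d ++ d')) (add (ofMonomials d) (ofMonomials d')) := by
  induction d with
  | nil => exact absurd rfl hd
  | cons m d ih =>
    rcases eq_or_ne d [] with rfl | hd
    · rw [List.singleton_append, ofMonomials_cons m hd']; exact .refl _
    rw [List.cons_append, ofMonomials_cons m (by simp [hd]), ofMonomials_cons m hd]
    exact (Equiv.addCongr (.refl _) (ih hd)).trans (.symm (.addAssoc _ _ _))

theorem ofMonomials_map_append (m : List SOP) {d : List (List SOP)} (hd : d ≠ []) :
    Equiv (ofMonomials (d.map (m ++ ·))) (mul (ofMonomial m) (ofMonomials d)) := by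
  induction d with
  | nil => exact absurd rfl hd
  | cons m' d ih =>
    rcases eq_or_ne d [] with rfl | hd
    · exact ofMonomial_append m m'
    rw [List.map_cons, ofMonomials_cons _ (by simp [hd]), ofMonomials_cons _ hd]
    exact (Equiv.addCongr (ofMonomial_append m m') (ih hd)).trans (.symm (.distrib _ _ _))

theorem mulMonomials_ne_nil {d d' : List (List SOP)} (hd : d ≠ []) (hd' : d' ≠ []) :
    mulMonomials d d' ≠ [] := by
  obtain ⟨m, d, rfl⟩ := List.exists_cons_of_ne_nil hd
  simp [mulMonomials, hd']

theorem ofMonomials_mulMonomials {d d' : List (List SOP)} (hd : d ≠ []) (hd' : d' ≠ []) :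
    Equiv (ofMonomials (mulMonomials d d')) (mul (ofMonomials d) (ofMonomials d')) := by
  induction d with
  | nil => exact absurd rfl hd
  | cons m d ih =>
    rcases eq_or_ne d [] with rfl | hd
    · simpa [mulMonomials, ofMonomials] using ofMonomials_map_append m hd'
    rw [mulMonomials, List.flatMap_cons, ofMonomials_cons m hd]
    refine (ofMonomials_append (by simpa using hd') (mulMonomials_ne_nil hd hd')).trans ?_
    exact (Equiv.addCongr (ofMonomials_map_append m hd') (ih hd)).trans (.symm (.add_mul _ _ _))

theorem monomials_ne_nil (P : SOP) : P.monomials ≠ [] := by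
  induction P with
  | add P Q ihP _ => simp [monomials, ihP]
  | mul P Q ihP ihQ => exact mulMonomials_ne_nil ihP ihQ
  | _ => simp [monomials]

theorem equiv_normalize (P : SOP) : Equiv P P.normalize := by
  induction P with
  | one => exact .refl _
  | varN => exact (Equiv.mulOne _).symm
  | add P Q ihP ihQ =>
    exact (Equiv.addCongr ihP ihQ).trans
      (ofMonomials_append (monomials_ne_nil P) (monomials_ne_nil Q)).symm
  | mul P Q ihP ihQ =>
    exact (Equiv.mulCongr ihP ihQ).trans
      (ofMonomials_mulMonomials (monomials_ne_nil P) (monomials_ne_nil Q)).symm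
  | lam P ih => exact (Equiv.lamCongr ih).trans (Equiv.mulOne _).symm

theorem ofMonomial_equiv_of_sum_pow_eq {B : ℕ} {f : SOP → ℕ} {m m' : List SOP}
    (hm : m.length < B) (hm' : m'.length < B)
    (h : ((m.map f).map (B ^ ·)).sum = ((m'.map f).map (B ^ ·)).sum)
    (hE : ∀ a ∈ m, ∀ b ∈ m', f a = f b → Equiv a b) :
    Equiv (ofMonomial m) (ofMonomial m') := by
  obtain ⟨m'', hf, hp⟩ := List.exists_forall₂_perm_of_perm_map
    (List.perm_of_sum_map_pow_eq (by simpa) (by simpa) h) hE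
  exact (ofMonomial_congr hf).trans (ofMonomial_perm hp)

theorem ofMonomials_equiv_of_sum_pow_eq {B : ℕ} {f : List SOP → ℕ} {d d' : List (List SOP)}
    (hd : d.length < B) (hd' : d'.length < B)
    (h : ((d.map f).map (B ^ ·)).sum = ((d'.map f).map (B ^ ·)).sum)
    (hE : ∀ m ∈ d, ∀ m' ∈ d', f m = f m' → Equiv (ofMonomial m) (ofMonomial m')) :
    Equiv (ofMonomials d) (ofMonomials d') := by
  obtain ⟨d'', hf, hp⟩ := List.exists_forall₂_perm_of_perm_map
    (List.perm_of_sum_map_pow_eq (by simpa) (by simpa) h) hE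
  exact (ofMonomials_congr hf).trans (ofMonomials_perm hp)

def tower (B m : ℕ) : ℕ := B ^ B ^ m

theorem tower_monotone {B : ℕ} (hB : 1 ≤ B) : Monotone (tower B) :=
  fun _ _ hxy => Nat.pow_le_pow_right hB (Nat.pow_le_pow_right hB hxy)

theorem one_le_eval {n : ℕ} {l : ℕ → ℕ} (hn : 1 ≤ n) (hl : ∀ x, 1 ≤ l x) (P : SOP) :
    1 ≤ P.eval n l := by
  induction P with
  | one => exact le_rfl
  | varN => exact hn
  | add P Q ihP _ => exact ihP.trans (Nat.le_add_right _ _)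
  | mul P Q ihP ihQ => exact Nat.one_le_iff_ne_zero.2 (Nat.mul_ne_zero (by omega) (by omega))
  | lam P _ => exact hl _

def IsAtom (a : SOP) : Prop := a = varN ∨ ∃ P, a = lam P

def atomWeight (B : ℕ) : SOP → ℕ
  | lam P => P.eval B (tower B)
  | _ => 0

def monomialExponent (B : ℕ) (m : List SOP) : ℕ := ((m.map (atomWeight B)).map (B ^ ·)).sum

theorem eval_ofMonomial {B : ℕ} {m : List SOP} (h : ∀ a ∈ m, IsAtom a) :
    (ofMonomial m).eval B (tower B) = B ^ monomialExponent B m := by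
  induction m with
  | nil => simp [ofMonomial, monomialExponent, eval]
  | cons a m ih =>
    have ha : a.eval B (tower B) = B ^ B ^ atomWeight B a := by
      rcases h a (by simp) with rfl | ⟨P, rfl⟩ <;> simp [eval, atomWeight, tower]
    simp only [ofMonomial, eval, ha, ih fun b hb => h b (by simp [hb]), monomialExponent,
      List.map_cons, List.sum_cons, pow_add]

theorem eval_ofMonomials {B : ℕ} {d : List (List SOP)} (hd : d ≠ [])
    (h : ∀ m ∈ d, ∀ a ∈ m, IsAtom a) :
    (ofMonomials d).eval B (tower B) = ((d.map (monomialExponent B)).map (B ^ ·)).sum := by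
  induction d with
  | nil => exact absurd rfl hd
  | cons m d ih =>
    rcases eq_or_ne d [] with rfl | hd
    · simp [ofMonomials, eval_ofMonomial (h m (by simp))]
    rw [ofMonomials_cons m hd, eval, eval_ofMonomial (h m (by simp)),
      ih hd fun m' hm' => h m' (by simp [hm'])]
    simp

def size : SOP → ℕ
  | one | varN => 1
  | add P Q | mul P Q => P.size + Q.size + 1
  | lam P => P.size + 1

theorem length_mulMonomials (d d' : List (List SOP)) :
    (mulMonomials d d').length = d.length * d'.length := by
  induction d with
  | nil => simp [mulMonomials]
  | cons m d ih => simp_all [mulMonomials, Nat.succ_mul, Nat.add_comm]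

theorem mem_mulMonomials {d d' : List (List SOP)} {m : List SOP} :
    m ∈ mulMonomials d d' ↔ ∃ m₁ ∈ d, ∃ m₂ ∈ d', m₁ ++ m₂ = m := by
  simp [mulMonomials]

theorem two_pow_add_two_pow_le (a b : ℕ) : 2 ^ a + 2 ^ b ≤ 2 ^ (a + b + 1) := by
  have ha : 2 ^ a ≤ 2 ^ (a + b) := Nat.pow_le_pow_right two_pos (Nat.le_add_right a b)
  have hb : 2 ^ b ≤ 2 ^ (a + b) := Nat.pow_le_pow_right two_pos (Nat.le_add_left b a)
  rw [pow_succ]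
  omega

theorem length_monomials_le (P : SOP) : P.monomials.length ≤ 2 ^ P.size := by
  induction P with
  | add P Q ihP ihQ =>
    simp only [monomials, size, List.length_append]
    exact (Nat.add_le_add ihP ihQ).trans (two_pow_add_two_pow_le _ _)
  | mul P Q ihP ihQ =>
    simp only [monomials, size, length_mulMonomials]
    calc _ ≤ 2 ^ P.size * 2 ^ Q.size := Nat.mul_le_mul ihP ihQ
      _ ≤ _ := by rw [← pow_add]; exact Nat.pow_le_pow_right two_pos (Nat.le_succ _)
  | _ => simp [monomials, size, Nat.one_le_two_pow]

theorem length_le_of_mem_monomials {P : SOP} {m : List SOP} (hm : m ∈ P.monomials) :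
    m.length ≤ 2 ^ P.size := by
  induction P generalizing m with
  | add P Q ihP ihQ =>
    rcases List.mem_append.1 hm with hm | hm
    · exact (ihP hm).trans ((Nat.le_add_right _ _).trans (two_pow_add_two_pow_le _ _))
    · exact (ihQ hm).trans ((Nat.le_add_left _ _).trans (two_pow_add_two_pow_le _ _))
  | mul P Q ihP ihQ =>
    obtain ⟨m₁, hm₁, m₂, hm₂, rfl⟩ := mem_mulMonomials.1 hm
    rw [List.length_append]
    exact (Nat.add_le_add (ihP hm₁) (ihQ hm₂)).trans (two_pow_add_two_pow_le _ _)
  | _ => simp_all [monomials, size, Nat.one_le_two_pow]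

theorem mem_monomials {P : SOP} {m : List SOP} {a : SOP} (hm : m ∈ P.monomials) (ha : a ∈ m) :
    a = varN ∨ ∃ R : SOP, R.size < P.size ∧ a = lam R.normalize := by
  induction P generalizing m with
  | one => simp_all [monomials]
  | varN => simp_all [monomials]
  | add P Q ihP ihQ =>
    rcases List.mem_append.1 hm with hm | hm
    · exact (ihP hm ha).imp_right fun ⟨R, hR, h⟩ => ⟨R, by simp only [size]; omega, h⟩
    · exact (ihQ hm ha).imp_right fun ⟨R, hR, h⟩ => ⟨R, by simp only [size]; omega, h⟩
  | mul P Q ihP ihQ =>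
    obtain ⟨m₁, hm₁, m₂, hm₂, rfl⟩ := mem_mulMonomials.1 hm
    rcases List.mem_append.1 ha with ha | ha
    · exact (ihP hm₁ ha).imp_right fun ⟨R, hR, h⟩ => ⟨R, by simp only [size]; omega, h⟩
    · exact (ihQ hm₂ ha).imp_right fun ⟨R, hR, h⟩ => ⟨R, by simp only [size]; omega, h⟩
  | lam P _ =>
    simp only [monomials_lam, List.mem_singleton] at hm
    subst hm
    exact .inr ⟨P, by simp [size], List.mem_singleton.1 ha⟩

theorem isAtom_of_mem_monomials {P : SOP} {m : List SOP} {a : SOP} (hm : m ∈ P.monomials)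
    (ha : a ∈ m) : IsAtom a :=
  (mem_monomials hm ha).imp_right fun ⟨_, _, h⟩ => ⟨_, h⟩

theorem normalize_equiv_of_eval_eq {B : ℕ} {R R' : SOP}
    (hR : 2 ^ R.size < B) (hR' : 2 ^ R'.size < B)
    (h : R.normalize.eval B (tower B) = R'.normalize.eval B (tower B)) :
    Equiv R.normalize R'.normalize := by
  have hB : 1 ≤ B := Nat.one_le_two_pow.trans hR.le
  rw [normalize, normalize,
    eval_ofMonomials (monomials_ne_nil R) fun _ hm _ => isAtom_of_mem_monomials hm,
    eval_ofMonomials (monomials_ne_nil R') fun _ hm _ => isAtom_of_mem_monomials hm] at h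
  refine ofMonomials_equiv_of_sum_pow_eq ((length_monomials_le R).trans_lt hR)
    ((length_monomials_le R').trans_lt hR') h fun m hm m' hm' hkey => ?_
  refine ofMonomial_equiv_of_sum_pow_eq ((length_le_of_mem_monomials hm).trans_lt hR)
    ((length_le_of_mem_monomials hm').trans_lt hR') hkey fun a ha b hb hw => ?_
  have hpos (S : SOP) : 1 ≤ S.eval B (tower B) :=
    one_le_eval hB (fun _ => Nat.one_le_pow _ _ hB) S
  rcases mem_monomials hm ha with rfl | ⟨S, hS, rfl⟩ <;>
    rcases mem_monomials hm' hb with rfl | ⟨S', hS', rfl⟩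
  · exact .refl _
  · exact absurd hw (Nat.ne_of_lt (hpos _))
  · exact absurd hw.symm (Nat.ne_of_lt (hpos _))
  · exact .lamCongr (normalize_equiv_of_eval_eq (Nat.pow_lt_pow_right one_lt_two hS |>.trans hR)
      (Nat.pow_lt_pow_right one_lt_two hS' |>.trans hR') hw)
termination_by R.size

end SOP

/-- Semantic agreement on all inputs implies syntactic equivalence. -/
theorem SOP.equiv_of_eval (P Q : SOP)
    (h : ∀ (n : ℕ) (l : ℕ → ℕ), Monotone l → P.eval n l = Q.eval n l) :
    SOP.Equiv P Q := by
  obtain ⟨B, hP, hQ⟩ : ∃ B, 2 ^ P.size < B ∧ 2 ^ Q.size < B :=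
    ⟨max (2 ^ P.size) (2 ^ Q.size) + 1, by omega, by omega⟩
  have heval := h B (SOP.tower B) (SOP.tower_monotone (Nat.one_le_two_pow.trans hP.le))
  rw [(SOP.equiv_normalize P).eval_eq, (SOP.equiv_normalize Q).eval_eq] at heval
  exact (SOP.equiv_normalize P).trans
    ((SOP.normalize_equiv_of_eval_eq hP hQ heval).trans (SOP.equiv_normalize Q).symm)
end

section
/- Substituting an ordinary polynomial for the function variable: if P is a second-order polynomial over ℕ and d ∈ ℕ, then the function n ↦ ⟦P⟧(n, m ↦ m^d) is (the evaluation of) an ordinary polynomial over ℕ, and its ordinary degree equals Deg(P)(d), the arctic degree of P evaluated at d — provided d ≥ 1. -/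
lemma SOP.evalOnePos (P : SOP) (d : ℕ) (hd : 1 ≤ d) :
    0 < P.eval 1 (fun m => m ^ d) := by
  induction P with
  | one => simp [SOP.eval]
  | varN => simp [SOP.eval]
  | add P Q ihP ihQ => simp only [SOP.eval]; omega
  | mul P Q ihP ihQ => simp only [SOP.eval]; exact Nat.mul_pos ihP ihQ
  | lam P ih => simp only [SOP.eval]; exact pow_pos ih d

lemma natDegree_add_max_nat (p q : Polynomial ℕ) (hp : p ≠ 0) (hq : q ≠ 0) :
    (p + q).natDegree = max p.natDegree q.natDegree := by
  have h : p.leadingCoeff + q.leadingCoeff ≠ 0 := by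
    have := Polynomial.leadingCoeff_ne_zero.mpr hp
    omega
  have hdeg := Polynomial.degree_add_eq_of_leadingCoeff_add_ne_zero h
  rw [Polynomial.degree_eq_natDegree hp, Polynomial.degree_eq_natDegree hq] at hdeg
  rcases le_total p.natDegree q.natDegree with hle | hle
  · rw [max_eq_right hle]
    apply Polynomial.natDegree_eq_of_degree_eq_some
    rw [hdeg, max_eq_right (by exact_mod_cast hle)]
  · rw [max_eq_left hle]
    apply Polynomial.natDegree_eq_of_degree_eq_some
    rw [hdeg, max_eq_left (by exact_mod_cast hle)]

/-- Substituting the monomial `m ↦ m^d` (with `d ≥ 1`) for the function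
variable yields an ordinary polynomial whose degree is the arctic degree of
`P` evaluated at `d`. -/
theorem SOP.eval_pow_polynomial (P : SOP) (d : ℕ) (hd : 1 ≤ d) :
    ∃ p : Polynomial ℕ,
      (∀ n : ℕ, P.eval n (fun m => m ^ d) = p.eval n) ∧
      p.natDegree = P.deg.eval d := by
  induction P with
  | one =>
    exact ⟨1, fun n => by simp [SOP.eval], by simp [SOP.deg, Arctic.eval]⟩
  | varN =>
    exact ⟨Polynomial.X, fun n => by simp [SOP.eval],
      by simp [SOP.deg, Arctic.eval]⟩
  | add P Q ihP ihQ =>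
    obtain ⟨p, hp, hpd⟩ := ihP
    obtain ⟨q, hq, hqd⟩ := ihQ
    have hp0 : p ≠ 0 := by
      intro h
      have h1 := hp 1
      rw [h, Polynomial.eval_zero] at h1
      exact (P.evalOnePos d hd).ne' h1
    have hq0 : q ≠ 0 := by
      intro h
      have h1 := hq 1
      rw [h, Polynomial.eval_zero] at h1
      exact (Q.evalOnePos d hd).ne' h1
    refine ⟨p + q, fun n => by simp [SOP.eval, hp, hq], ?_⟩
    rw [natDegree_add_max_nat p q hp0 hq0, hpd, hqd]
    rfl
  | mul P Q ihP ihQ =>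
    obtain ⟨p, hp, hpd⟩ := ihP
    obtain ⟨q, hq, hqd⟩ := ihQ
    have hp0 : p ≠ 0 := by
      intro h
      have h1 := hp 1
      rw [h, Polynomial.eval_zero] at h1
      exact (P.evalOnePos d hd).ne' h1
    have hq0 : q ≠ 0 := by
      intro h
      have h1 := hq 1
      rw [h, Polynomial.eval_zero] at h1
      exact (Q.evalOnePos d hd).ne' h1
    refine ⟨p * q, fun n => by simp [SOP.eval, hp, hq], ?_⟩
    rw [Polynomial.natDegree_mul hp0 hq0, hpd, hqd]
    rfl
  | lam P ihP =>
    obtain ⟨p, hp, hpd⟩ := ihP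
    have hp0 : p ≠ 0 := by
      intro h
      have h1 := hp 1
      rw [h, Polynomial.eval_zero] at h1
      exact (P.evalOnePos d hd).ne' h1
    refine ⟨p ^ d, fun n => by simp [SOP.eval, hp], ?_⟩
    rw [Polynomial.natDegree_pow, hpd]
    rfl
end
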